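/- Let D be a weighted oriented graph such that every vertex of V^+ is a sink, and let I = I(D). Then the second symbolic power satisfies I^(2) = I^2 + (x_i^{w(x_i)} x_j^{w(x_j)} x_r^{w(x_r)} : {x_i, x_j, x_r} induces a triangle in the underlying graph G). -/

import Mathlib

open scoped BigOperators
open MvPolynomial

noncomputable section

/-- A weighted oriented graph on the vertex set `Fin n`: a loopless directed graph
together with a weight function taking values `≥ 1`. -/
structure WOGraph (n : ℕ) where
  adj : Fin n → Fin n → Prop
  loopless : ∀ i, ¬ adj i i
  w : Fin n → ℕ
  one_le_w : ∀ i, 1 ≤ w i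

namespace WOGraph

variable {n : ℕ} (D : WOGraph n)

/-- The underlying simple graph `G` of `D`. -/
def underlying : SimpleGraph (Fin n) where
  Adj i j := D.adj i j ∨ D.adj j i
  symm := ⟨fun _ _ h => h.symm⟩
  loopless := ⟨fun i h => h.elim (D.loopless i) (D.loopless i)⟩

/-- A sink: no edge leaves it. -/
def IsSink (i : Fin n) : Prop := ∀ j, ¬ D.adj i j

/-- A source: no edge enters it. -/
def IsSource (i : Fin n) : Prop := ∀ j, ¬ D.adj j i

/-- `V⁺`: the set of vertices of non-trivial weight. -/
def Vplus : Set (Fin n) := {i | 2 ≤ D.w i}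

/-- Closed neighborhood `N[S]` of a set of vertices in the underlying graph. -/
def nbhd (S : Set (Fin n)) : Set (Fin n) := S ∪ {j | ∃ i ∈ S, D.underlying.Adj i j}

/-- `{i, j, r}` induces a triangle in the underlying graph. -/
def IsTriangle (i j r : Fin n) : Prop :=
  D.underlying.Adj i j ∧ D.underlying.Adj j r ∧ D.underlying.Adj i r

/-- The maximal weight `w = max{w(x) : x ∈ V(D)}`. -/
def maxW : ℕ := Finset.univ.sup D.w

/-- Gap-free: no two disjoint edges of the underlying graph form an induced matching. -/
def GapFree : Prop := ∀ a b c d : Fin n,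
  D.underlying.Adj a b → D.underlying.Adj c d → a ≠ c → a ≠ d → b ≠ c → b ≠ d →
    (D.underlying.Adj a c ∨ D.underlying.Adj a d ∨ D.underlying.Adj b c ∨ D.underlying.Adj b d)

end WOGraph

/-- The polynomial ring `R = K[x_1, …, x_n]`. -/
abbrev MvPoly (n : ℕ) (K : Type*) [Field K] := MvPolynomial (Fin n) K

variable {n : ℕ} (K : Type*) [Field K]

/-- The edge ideal of the induced weighted oriented subgraph of `D` on a vertex subset `U`,
regarded as an ideal of `K[x_1, …, x_n]`. -/
def edgeIdealOn (D : WOGraph n) (U : Set (Fin n)) : Ideal (MvPoly n K) :=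
  Ideal.span {m | ∃ i j, i ∈ U ∧ j ∈ U ∧ D.adj i j ∧ m = X i * X j ^ D.w j}

/-- The edge ideal `I(D) = (x_i x_j^{w(x_j)} : (x_i, x_j) ∈ E(D))`. -/
def edgeIdeal (D : WOGraph n) : Ideal (MvPoly n K) := edgeIdealOn K D Set.univ

/-- The `k`-th symbolic power `I^{(k)} = ⋂_{P ∈ Min(R/I)} (I^k R_P ∩ R)`. -/
def symbolicPower {R : Type*} [CommRing R] (I : Ideal R) (k : ℕ) : Ideal R :=
  ⨅ (P : Ideal R), ⨅ (hP : P ∈ I.minimalPrimes),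
    haveI : P.IsPrime := hP.1.1
    Ideal.comap (algebraMap R (Localization.AtPrime P))
      (Ideal.map (algebraMap R (Localization.AtPrime P)) (I ^ k))

/-! ### Simplicial homology machinery, used to define multigraded Betti numbers of monomial
ideals via upper Koszul simplicial complexes, and thence Castelnuovo–Mumford regularity. -/

/-- The faces of dimension `c` (i.e. of cardinality `c + 1`) of a simplicial complex on `Fin n`. -/
abbrev Face (Δ : Set (Finset (Fin n))) (c : ℤ) : Type _ :=
  {S : Finset (Fin n) // S ∈ Δ ∧ (S.card : ℤ) = c + 1}

/-- The space of simplicial `c`-chains with coefficients in `K`. -/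
abbrev SChain (Δ : Set (Finset (Fin n))) (c : ℤ) : Type _ := Face Δ c → K

open Classical in
/-- Incidence number between faces: `±1` if `T ⊂ S` with `|S \ T| = 1`, else `0`. -/
def inc (S T : Finset (Fin n)) : K :=
  if T ⊆ S ∧ (S \ T).card = 1
  then (-1 : K) ^ (S.filter fun j => ∃ i ∈ S \ T, j < i).card
  else 0

/-- The simplicial boundary map from `c`-chains to `d`-chains (nonzero only when `d = c - 1`). -/
def bdry (Δ : Set (Finset (Fin n))) (c d : ℤ) : SChain K Δ c →ₗ[K] SChain K Δ d where
  toFun f T := ∑ᶠ S : Face Δ c, inc K S.1 T.1 * f S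
  map_add' f g := by
    funext T
    simp only [Pi.add_apply, mul_add]
    exact finsum_add_distrib (Set.toFinite _) (Set.toFinite _)
  map_smul' r f := by
    funext T
    simp only [Pi.smul_apply, smul_eq_mul, RingHom.id_apply]
    rw [mul_finsum _ _]
    exact finsum_congr fun S => by ring

/-- The reduced simplicial homology `H̃_c(Δ; K)` in dimension `c`. -/
abbrev redHomology (Δ : Set (Finset (Fin n))) (c : ℤ) : Type _ :=
  LinearMap.ker (bdry K Δ c (c - 1)) ⧸
    Submodule.comap (LinearMap.ker (bdry K Δ c (c - 1))).subtype
      (LinearMap.range (bdry K Δ (c + 1) c))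

/-- The upper Koszul simplicial complex `K^a(I)` of a monomial ideal `I` in degree `a`. -/
def upperKoszul (I : Ideal (MvPoly n K)) (a : Fin n →₀ ℕ) : Set (Finset (Fin n)) :=
  {S | (∀ i ∈ S, 1 ≤ a i) ∧
    (monomial (a - ∑ i ∈ S, Finsupp.single i 1) (1 : K)) ∈ I}

/-- The multigraded Betti number `β_{i,a}(I) = dim_K H̃_{i-1}(K^a(I); K)` of a monomial ideal. -/
def bettiMulti (I : Ideal (MvPoly n K)) (i : ℕ) (a : Fin n →₀ ℕ) : ℕ :=
  Module.finrank K (redHomology K (upperKoszul K I a) ((i : ℤ) - 1))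

/-- The graded Betti number `β_{i,j}(I) = ∑_{|a| = j} β_{i,a}(I)` of a monomial ideal. -/
def betti (I : Ideal (MvPoly n K)) (i j : ℕ) : ℕ :=
  ∑ᶠ (a : Fin n →₀ ℕ) (_ : (∑ v, a v) = j), bettiMulti K I i a

/-- Castelnuovo–Mumford regularity `reg(I) = max{j - i : β_{i,j}(I) ≠ 0}` of a monomial ideal. -/
def reg (I : Ideal (MvPoly n K)) : ℕ :=
  sSup {d : ℕ | ∃ i j : ℕ, betti K I i j ≠ 0 ∧ j = d + i}

/-- `f` is a monomial (with coefficient 1). -/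
def IsMonomial (f : MvPoly n K) : Prop := ∃ e : Fin n →₀ ℕ, f = monomial e 1

/-- `f` is a minimal monomial generator of the monomial ideal `J`. -/
def IsMinGen (J : Ideal (MvPoly n K)) (f : MvPoly n K) : Prop :=
  IsMonomial K f ∧ f ∈ J ∧ ∀ g : MvPoly n K, IsMonomial K g → g ∈ J → g ∣ f → g = f

end

/-!
Because every vertex of `V⁺` is a sink, the tail of every arc has weight one, so `I = I(D)` is
generated by the monomials `x_i^{w_i} x_j^{w_j}` over the edges `{i, j}` of `G`. Its minimal
primes are the ideals `P_C = (x_v : v ∈ C)` of the minimal vertex covers `C` of `G`.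

Comparing the parts of lowest degree in the variables of `C` shows that `P_C` is prime and that
an element `s ∉ P_C` is a nonzerodivisor modulo every monomial ideal saturated with respect to
the variables outside `C`. Hence if `x^e ∈ I^2 R_{P_C} ∩ R`, then `x^b x^e ∈ I^2` for a monomial
`x^b` in the variables outside `C`, which forces `C` to contain a vertex `v` with `e_v ≥ 2 w_v`
or two vertices with `e_v ≥ w_v`.

Suppose `x^e ∉ I^2 + (triangle monomials)` and let `U = {v | e_v ≥ w_v}`,
`R = {v | e_v ≥ 2 w_v}`. The edges of `G` inside `U` pairwise meet and span no triangle, so they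
form a star, whose centre `c` can be chosen outside `R`; a minimal vertex cover contained in the
complement of `U \ {c}` then violates the condition above. Conversely a triangle monomial lies in
`I^(2)`: a minimal cover `C` contains a vertex `r` of the triangle, `r` has a neighbour `y ∉ C`,
and `x_y^{w_y}` times the triangle monomial is a product of two generators of `I`.
-/

open scoped Pointwise

theorem Ideal.mem_comap_map_atPrime_iff {R : Type*} [CommRing R] (P : Ideal R) [P.IsPrime]
    (I : Ideal R) {f : R} :
    f ∈ (I.map (algebraMap R (Localization.AtPrime P))).comap
        (algebraMap R (Localization.AtPrime P)) ↔ ∃ s ∉ P, s * f ∈ I :=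
  IsLocalization.algebraMap_mem_map_algebraMap_iff P.primeCompl _ I f

theorem Finsupp.weight_indicator_eq_zero_iff {σ : Type*} {C : Set σ} {d : σ →₀ ℕ} :
    weight (C.indicator 1) d = 0 ↔ ∀ v ∈ C, d v = 0 := by
  simp only [weight_apply, Finsupp.sum, smul_eq_mul, Finset.sum_eq_zero_iff,
    Finsupp.mem_support_iff, mul_eq_zero, Set.indicator_apply_eq_zero, Pi.one_apply, one_ne_zero]
  exact forall_congr' fun v => by tauto

namespace MvPolynomial

open Finsupp

variable {σ R : Type*}

section CommSemiring

variable [CommSemiring R]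

theorem weightedHomogeneousComponent_mul_of_le {w : σ → ℕ} {s f : MvPolynomial σ R} {p q : ℕ}
    (hs : ∀ d ∈ s.support, p ≤ weight w d) (hf : ∀ d ∈ f.support, q ≤ weight w d) :
    weightedHomogeneousComponent w (p + q) (s * f) =
      weightedHomogeneousComponent w p s * weightedHomogeneousComponent w q f := by
  classical
  ext d
  rw [coeff_weightedHomogeneousComponent]
  split_ifs with hd
  · rw [coeff_mul, coeff_mul]
    refine Finset.sum_congr rfl fun x hx => ?_
    rw [Finset.HasAntidiagonal.mem_antidiagonal] at hx
    rw [← hx, map_add] at hd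
    simp only [coeff_weightedHomogeneousComponent]
    rcases trichotomy_of_add_eq_add hd with h | h | h
    · rw [if_pos h.1, if_pos h.2]
    · rw [if_neg h.ne, notMem_support_iff.1 fun hx₁ => (hs _ hx₁).not_gt h, zero_mul, zero_mul]
    · rw [if_neg h.ne, notMem_support_iff.1 fun hx₂ => (hf _ hx₂).not_gt h, mul_zero, mul_zero]
  · exact (((weightedHomogeneousComponent_isWeightedHomogeneous p s).mul
      (weightedHomogeneousComponent_isWeightedHomogeneous q f)).coeff_eq_zero d hd).symm

theorem notMem_span_X_image_iff {C : Set σ} {f : MvPolynomial σ R} :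
    f ∉ Ideal.span (X '' C) ↔ ∃ d ∈ f.support, weight (C.indicator 1) d = 0 := by
  simp [mem_ideal_span_X_image, weight_indicator_eq_zero_iff]

theorem X_mem_span_X_image_iff [Nontrivial R] {C : Set σ} {v : σ} :
    (X v : MvPolynomial σ R) ∈ Ideal.span (X '' C) ↔ v ∈ C := by
  classical
  simp [mem_ideal_span_X_image, support_X, Finsupp.single_apply]

theorem mem_span_monomial_image_iff_of_isUpperSet {S : Set (σ →₀ ℕ)} (hS : IsUpperSet S)
    {f : MvPolynomial σ R} :
    f ∈ Ideal.span ((fun d => monomial d (1 : R)) '' S) ↔ ∀ d ∈ f.support, d ∈ S :=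
  mem_ideal_span_monomial_image.trans <| forall₂_congr fun d _ =>
    ⟨fun ⟨_, hg, hgd⟩ => hS hgd hg, fun hd => ⟨d, hd, le_rfl⟩⟩

theorem span_monomial_image_mul (A B : Set (σ →₀ ℕ)) :
    Ideal.span ((fun d => monomial d (1 : R)) '' A) *
        Ideal.span ((fun d => monomial d (1 : R)) '' B) =
      Ideal.span ((fun d => monomial d (1 : R)) '' (A + B)) := by
  rw [Ideal.span_mul_span']
  congr 1
  ext m
  simp only [Set.mem_mul, Set.mem_add, Set.mem_image]
  constructor
  · rintro ⟨_, ⟨a, ha, rfl⟩, _, ⟨b, hb, rfl⟩, rfl⟩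
    exact ⟨a + b, ⟨a, ha, b, hb, rfl⟩, by rw [monomial_mul, one_mul]⟩
  · rintro ⟨_, ⟨a, ha, b, hb, rfl⟩, rfl⟩
    exact ⟨_, ⟨a, ha, rfl⟩, _, ⟨b, hb, rfl⟩, by rw [monomial_mul, one_mul]⟩

variable [NoZeroDivisors R]

theorem exists_add_mem_support_mul (w : σ → ℕ) {s f : MvPolynomial σ R}
    (hs : ∃ a ∈ s.support, weight w a = 0) (hf : f ≠ 0) :
    ∃ a e, weight w a = 0 ∧ e ∈ f.support ∧ (∀ e' ∈ f.support, weight w e ≤ weight w e') ∧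
      a + e ∈ (s * f).support := by
  classical
  obtain ⟨e₀, he₀, hmin⟩ := f.support.exists_min_image (weight w) (support_nonempty.2 hf)
  obtain ⟨a₀, ha₀, hwa₀⟩ := hs
  -- the part of `s * f` of weight `weight w e₀` is `s₀ * f₀`
  set s₀ := weightedHomogeneousComponent w 0 s
  set f₀ := weightedHomogeneousComponent w (weight w e₀) f
  have hs₀ : s₀ ≠ 0 := ne_zero_iff.2 ⟨a₀, by
    rwa [coeff_weightedHomogeneousComponent, if_pos hwa₀, ← mem_support_iff]⟩
  have hf₀ : f₀ ≠ 0 := ne_zero_iff.2 ⟨e₀, by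
    rwa [coeff_weightedHomogeneousComponent, if_pos rfl, ← mem_support_iff]⟩
  obtain ⟨u, hu⟩ := support_nonempty.2 (mul_ne_zero hs₀ hf₀)
  obtain ⟨a, ha, e, he, rfl⟩ := Finset.mem_add.1 (support_mul _ _ hu)
  have hwa : weight w a = 0 :=
    weightedHomogeneousComponent_isWeightedHomogeneous 0 s (mem_support_iff.1 ha)
  have hwe : weight w e = weight w e₀ :=
    weightedHomogeneousComponent_isWeightedHomogeneous _ f (mem_support_iff.1 he)
  have hef : e ∈ f.support := by
    rw [mem_support_iff, coeff_weightedHomogeneousComponent, if_pos hwe] at he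
    exact mem_support_iff.2 he
  refine ⟨a, e, hwa, hef, hwe ▸ hmin, ?_⟩
  have hcomp := weightedHomogeneousComponent_mul_of_le (s := s) (fun _ _ => Nat.zero_le _) hmin
  rw [zero_add] at hcomp
  rw [mem_support_iff, ← hcomp, coeff_weightedHomogeneousComponent, if_pos (by
    rw [map_add, hwa, hwe, zero_add])] at hu
  exact mem_support_iff.2 hu

instance isPrime_span_X_image [Nontrivial R] (C : Set σ) :
    (Ideal.span (X '' C : Set (MvPolynomial σ R))).IsPrime := by
  refine ⟨fun h => notMem_span_X_image_iff.2 ⟨0, by simp, map_zero _⟩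
    (h ▸ Submodule.mem_top : (1 : MvPolynomial σ R) ∈ _), fun {s f} hsf => ?_⟩
  by_contra! h
  obtain ⟨a, e, ha, -, hmin, hae⟩ := exists_add_mem_support_mul (f := f) _
    (notMem_span_X_image_iff.1 h.1) fun hf => h.2 (by rw [hf]; exact Submodule.zero_mem _)
  obtain ⟨e', he', hwe'⟩ := notMem_span_X_image_iff.1 h.2
  refine notMem_span_X_image_iff.2 ⟨a + e, hae, ?_⟩ hsf
  rw [map_add, ha, zero_add]
  exact Nat.eq_zero_of_le_zero (hwe' ▸ hmin e' he')

end CommSemiring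

section CommRing

variable [CommRing R] [NoZeroDivisors R]

theorem mem_span_monomial_image_of_mul_mem {C : Set σ} {S : Set (σ →₀ ℕ)} (hS : IsUpperSet S)
    (hsat : ∀ a d, (∀ v ∈ C, a v = 0) → a + d ∈ S → d ∈ S) {s f : MvPolynomial σ R}
    (hs : s ∉ Ideal.span (X '' C))
    (hsf : s * f ∈ Ideal.span ((fun d => monomial d (1 : R)) '' S)) :
    f ∈ Ideal.span ((fun d => monomial d (1 : R)) '' S) := by
  classical
  set J := Ideal.span ((fun d => monomial d (1 : R)) '' S)
  by_contra hf
  -- `f'` is the part of `f` outside `S`; a term `a + e` of `s * f'` with `a` free of `C` and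
  -- `e` a term of `f'` would put `e` into `S`
  set f' : MvPolynomial σ R := ∑ d ∈ f.support with d ∉ S, monomial d (coeff d f)
  have hfS : f - f' ∈ J := by
    have hsplit := Finset.sum_filter_add_sum_filter_not f.support (· ∈ S)
      fun d => monomial d (coeff d f)
    rw [support_sum_monomial_coeff] at hsplit
    rw [← hsplit, add_sub_cancel_right]
    refine J.sum_mem fun d hd => ?_
    rw [← mul_one (coeff d f), ← C_mul_monomial]
    exact J.mul_mem_left _ (Ideal.subset_span ⟨d, (Finset.mem_filter.1 hd).2, rfl⟩)
  have hf' : f' ≠ 0 := fun h => hf (by simpa [h] using hfS)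
  have hsf' : s * f' ∈ J := by simpa [mul_sub] using J.sub_mem hsf (J.mul_mem_left s hfS)
  obtain ⟨a, e, ha, he, -, hae⟩ :=
    exists_add_mem_support_mul _ (notMem_span_X_image_iff.1 hs) hf'
  have heS : e ∉ S := by
    obtain ⟨d, hd, hed⟩ := Finset.mem_biUnion.1 (support_sum he)
    rw [Finset.mem_singleton.1 (support_monomial_subset hed)]
    exact (Finset.mem_filter.1 hd).2
  exact heS (hsat a e (weight_indicator_eq_zero_iff.1 ha)
    ((mem_span_monomial_image_iff_of_isUpperSet hS).1 hsf' _ hae))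

theorem exists_le_add_of_mul_mem {C : Set σ} {E : Set (σ →₀ ℕ)} {s f : MvPolynomial σ R}
    (hs : s ∉ Ideal.span (X '' C))
    (hsf : s * f ∈ Ideal.span ((fun d => monomial d (1 : R)) '' E))
    {e : σ →₀ ℕ} (he : e ∈ f.support) :
    ∃ a, (∀ v ∈ C, a v = 0) ∧ ∃ g ∈ E, g ≤ a + e := by
  set S := {d | ∃ a, (∀ v ∈ C, a v = 0) ∧ ∃ g ∈ E, g ≤ a + d}
  have hS : IsUpperSet S := fun d d' hdd' ⟨a, ha, g, hg, hgd⟩ =>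
    ⟨a, ha, g, hg, hgd.trans (add_le_add_right hdd' a)⟩
  have hsat : ∀ a d, (∀ v ∈ C, a v = 0) → a + d ∈ S → d ∈ S :=
    fun a d ha ⟨b, hb, g, hg, hgd⟩ =>
      ⟨b + a, fun v hv => by simp [hb v hv, ha v hv], g, hg, by rwa [add_assoc]⟩
  have hES : E ⊆ S := fun g hg => ⟨0, fun _ _ => rfl, g, hg, by rw [zero_add]⟩
  exact (mem_span_monomial_image_iff_of_isUpperSet hS).1
    (mem_span_monomial_image_of_mul_mem hS hsat hs (Ideal.span_mono (Set.image_mono hES) hsf))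
    e he

end CommRing

end MvPolynomial

namespace SimpleGraph

variable {V : Type*} {G : SimpleGraph V}

theorem exists_adj_notMem_of_minimal_isVertexCover {C : Set V}
    (hC : Minimal G.IsVertexCover C) {v : V} (hv : v ∈ C) : ∃ x ∉ C, G.Adj v x := by
  have hv' : ¬ G.IsVertexCover (C \ {v}) := fun h =>
    (hC.le_of_le h Set.sdiff_subset hv).2 rfl
  simp only [IsVertexCover, not_forall, not_or] at hv'
  obtain ⟨a, b, hab, ha, hb⟩ := hv'
  rcases hC.prop hab with haC | hbC
  · obtain rfl : a = v := by simpa [haC] using ha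
    exact ⟨b, fun hbC => hab.ne (Eq.symm (by simpa [hbC] using hb)), hab⟩
  · obtain rfl : b = v := by simpa [hbC] using hb
    exact ⟨a, fun haC => hab.ne (by simpa [haC] using ha), hab.symm⟩

variable {U R : Set V}

theorem isVertexCover_insert_compl_or
    (hmatch : ∀ a ∈ U, ∀ b ∈ U, ∀ a' ∈ U, ∀ b' ∈ U, G.Adj a b → G.Adj a' b' →
      a = a' ∨ a = b' ∨ b = a' ∨ b = b')
    (htri : ∀ a ∈ U, ∀ b ∈ U, ∀ c ∈ U, G.Adj a b → G.Adj b c → ¬ G.Adj a c)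
    {a b : V} (ha : a ∈ U) (hb : b ∈ U) (hab : G.Adj a b) :
    G.IsVertexCover (insert a Uᶜ) ∨ G.IsVertexCover (insert b Uᶜ) := by
  have other_end : ∀ {a b}, a ∈ U → b ∈ U → G.Adj a b → ¬ G.IsVertexCover (insert a Uᶜ) →
      ∃ z ∈ U, z ≠ a ∧ G.Adj b z := by
    intro a b ha hb hab h
    simp only [IsVertexCover, Set.mem_insert_iff, Set.mem_compl_iff, not_forall, not_or,
      not_not] at h
    obtain ⟨x, y, hxy, ⟨hxa, hx⟩, hya, hy⟩ := h
    rcases hmatch a ha b hb x hx y hy hab hxy with rfl | rfl | rfl | rfl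
    · exact absurd rfl hxa
    · exact absurd rfl hya
    · exact ⟨y, hy, hya, hxy⟩
    · exact ⟨x, hx, hxa, hxy.symm⟩
  by_contra! h
  obtain ⟨z, hz, hza, hbz⟩ := other_end ha hb hab h.1
  obtain ⟨z', hz', hz'b, haz'⟩ := other_end hb ha hab.symm h.2
  rcases hmatch b hb z hz a ha z' hz' hbz haz' with h | h | h | rfl
  · exact hab.ne h.symm
  · exact hz'b h.symm
  · exact hza h
  · exact htri a ha b hb z hz hab hbz haz'

theorem exists_notMem_isVertexCover_insert_compl
    (hpath : ∀ c ∈ R, ∀ x ∈ U, ∀ y ∈ U, G.Adj c x → G.Adj c y → x = y)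
    (hedge : ∀ a ∈ R, ∀ b ∈ R, ¬ G.Adj a b)
    {a b : V} (hb : b ∈ U) (hab : G.Adj a b) (ha : G.IsVertexCover (insert a Uᶜ)) :
    ∃ c ∉ R, G.IsVertexCover (insert c Uᶜ) := by
  by_cases haR : a ∈ R
  · refine ⟨b, fun hbR => hedge a haR b hbR hab, fun u u' huu' => ?_⟩
    -- every edge inside `U` passes through `a`, and `b` is the only neighbour of `a` in `U`
    have h := ha huu'
    simp only [Set.mem_insert_iff, Set.mem_compl_iff] at h ⊢
    rcases h with (rfl | hu) | (rfl | hu')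
    · exact Or.inr (or_iff_not_imp_right.2 fun hu' =>
        hpath u haR u' (not_not.1 hu') b hb huu' hab)
    · exact Or.inl (Or.inr hu)
    · exact Or.inl (or_iff_not_imp_right.2 fun hu =>
        hpath u' haR u (not_not.1 hu) b hb huu'.symm hab)
    · exact Or.inr (Or.inr hu')
  · exact ⟨a, haR, ha⟩

theorem exists_minimal_isVertexCover_disjoint_inter_subsingleton [Finite V] (hRU : R ⊆ U)
    (hmatch : ∀ a ∈ U, ∀ b ∈ U, ∀ a' ∈ U, ∀ b' ∈ U, G.Adj a b → G.Adj a' b' →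
      a = a' ∨ a = b' ∨ b = a' ∨ b = b')
    (htri : ∀ a ∈ U, ∀ b ∈ U, ∀ c ∈ U, G.Adj a b → G.Adj b c → ¬ G.Adj a c)
    (hpath : ∀ c ∈ R, ∀ x ∈ U, ∀ y ∈ U, G.Adj c x → G.Adj c y → x = y)
    (hedge : ∀ a ∈ R, ∀ b ∈ R, ¬ G.Adj a b) :
    ∃ C, Minimal G.IsVertexCover C ∧ Disjoint C R ∧ (C ∩ U).Subsingleton := by
  suffices ∃ C₀, G.IsVertexCover C₀ ∧ Disjoint C₀ R ∧ (C₀ ∩ U).Subsingleton by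
    obtain ⟨C₀, hC₀, hR, hU⟩ := this
    obtain ⟨C, hCC₀, hC⟩ := exists_minimal_le_of_wellFoundedLT _ C₀ hC₀
    exact ⟨C, hC, hR.mono_left hCC₀, hU.anti (Set.inter_subset_inter_left U hCC₀)⟩
  by_cases hE : ∃ a ∈ U, ∃ b ∈ U, G.Adj a b
  · obtain ⟨a, ha, b, hb, hab⟩ := hE
    obtain ⟨c, hcR, hc⟩ : ∃ c ∉ R, G.IsVertexCover (insert c Uᶜ) := by
      rcases isVertexCover_insert_compl_or hmatch htri ha hb hab with h | h
      · exact exists_notMem_isVertexCover_insert_compl hpath hedge hb hab h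
      · exact exists_notMem_isVertexCover_insert_compl hpath hedge ha hab.symm h
    refine ⟨insert c Uᶜ, hc, Set.disjoint_insert_left.2 ⟨hcR, disjoint_compl_left_iff.2 hRU⟩,
      (Set.subsingleton_singleton (a := c)).anti ?_⟩
    rintro v ⟨rfl | hv, hvU⟩
    exacts [rfl, absurd hvU hv]
  · push Not at hE
    refine ⟨Uᶜ, fun u u' huu' => ?_, disjoint_compl_left_iff.2 hRU, by simp⟩
    by_contra! h
    exact hE u (by simpa using h.1) u' (by simpa using h.2) huu'

end SimpleGraph

namespace WOGraph

variable {n : ℕ} (D : WOGraph n)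

noncomputable def edgeExp (i j : Fin n) : Fin n →₀ ℕ :=
  Finsupp.single i (D.w i) + Finsupp.single j (D.w j)

def edgeExps : Set (Fin n →₀ ℕ) := {g | ∃ i j, D.underlying.Adj i j ∧ g = D.edgeExp i j}

def triangleExps : Set (Fin n →₀ ℕ) :=
  {g | ∃ i j r, D.IsTriangle i j r ∧ g = D.edgeExp i j + Finsupp.single r (D.w r)}

theorem edgeExp_comm (i j : Fin n) : D.edgeExp i j = D.edgeExp j i := add_comm _ _

theorem exists_mem_le_edgeExp {C : Set (Fin n)} (hC : D.underlying.IsVertexCover C)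
    {i j : Fin n} (hij : D.underlying.Adj i j) : ∃ v ∈ C, D.w v ≤ D.edgeExp i j v := by
  rcases hC hij with h | h
  · exact ⟨i, h, by simp [edgeExp]⟩
  · exact ⟨j, h, by simp [edgeExp]⟩

theorem inter_nonempty_or_inter_nontrivial_of_le_add {C : Set (Fin n)}
    (hC : D.underlying.IsVertexCover C) {b e g : Fin n →₀ ℕ} (hb : ∀ v ∈ C, b v = 0)
    (hg : g ∈ D.edgeExps + D.edgeExps) (hle : g ≤ b + e) :
    (C ∩ {v | 2 * D.w v ≤ e v}).Nonempty ∨ (C ∩ {v | D.w v ≤ e v}).Nontrivial := by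
  obtain ⟨_, ⟨i, j, hij, rfl⟩, _, ⟨i', j', hij', rfl⟩, rfl⟩ := hg
  obtain ⟨v, hvC, hv⟩ := D.exists_mem_le_edgeExp hC hij
  obtain ⟨v', hv'C, hv'⟩ := D.exists_mem_le_edgeExp hC hij'
  have hle_at : ∀ u ∈ C, D.edgeExp i j u + D.edgeExp i' j' u ≤ e u := fun u hu => by
    simpa [hb u hu] using hle u
  have := hle_at v hvC
  have := hle_at v' hv'C
  rcases eq_or_ne v v' with rfl | hvv'
  · exact Or.inl ⟨v, hvC, show 2 * D.w v ≤ e v by omega⟩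
  · exact Or.inr ⟨v, ⟨hvC, show D.w v ≤ e v by omega⟩, v', ⟨hv'C, show D.w v' ≤ e v' by omega⟩,
      hvv'⟩

section ExponentBounds

variable {D} {e : Fin n →₀ ℕ}

theorem edgeExp_add_edgeExp_le_of_ne {a b a' b' : Fin n} (hab : a ≠ b) (ha'b' : a' ≠ b')
    (haa' : a ≠ a') (hab' : a ≠ b') (hba' : b ≠ a') (hbb' : b ≠ b') (ha : D.w a ≤ e a)
    (hb : D.w b ≤ e b) (ha' : D.w a' ≤ e a') (hb' : D.w b' ≤ e b') :
    D.edgeExp a b + D.edgeExp a' b' ≤ e := fun v => by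
  simp only [edgeExp, Finsupp.add_apply, Finsupp.single_apply]
  split_ifs <;> subst_vars <;> omega

theorem edgeExp_add_edgeExp_le_of_center {c x y : Fin n} (hcx : c ≠ x) (hcy : c ≠ y)
    (hxy : x ≠ y) (hc : 2 * D.w c ≤ e c) (hx : D.w x ≤ e x) (hy : D.w y ≤ e y) :
    D.edgeExp c x + D.edgeExp c y ≤ e := fun v => by
  simp only [edgeExp, Finsupp.add_apply, Finsupp.single_apply]
  split_ifs <;> subst_vars <;> omega

theorem edgeExp_add_edgeExp_self_le {a b : Fin n} (hab : a ≠ b) (ha : 2 * D.w a ≤ e a)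
    (hb : 2 * D.w b ≤ e b) : D.edgeExp a b + D.edgeExp a b ≤ e := fun v => by
  simp only [edgeExp, Finsupp.add_apply, Finsupp.single_apply]
  split_ifs <;> subst_vars <;> omega

theorem edgeExp_add_single_le {i j r : Fin n} (hij : i ≠ j) (hjr : j ≠ r) (hir : i ≠ r)
    (hi : D.w i ≤ e i) (hj : D.w j ≤ e j) (hr : D.w r ≤ e r) :
    D.edgeExp i j + Finsupp.single r (D.w r) ≤ e := fun v => by
  simp only [edgeExp, Finsupp.add_apply, Finsupp.single_apply]
  split_ifs <;> subst_vars <;> omega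

end ExponentBounds

theorem exists_le_of_forall_minimal_isVertexCover (e : Fin n →₀ ℕ)
    (H : ∀ C, Minimal D.underlying.IsVertexCover C →
      (C ∩ {v | 2 * D.w v ≤ e v}).Nonempty ∨ (C ∩ {v | D.w v ≤ e v}).Nontrivial) :
    ∃ g ∈ D.edgeExps + D.edgeExps ∪ D.triangleExps, g ≤ e := by
  by_contra! h
  have hsq : ∀ {a b a' b'}, D.underlying.Adj a b → D.underlying.Adj a' b' →
      ¬ D.edgeExp a b + D.edgeExp a' b' ≤ e := fun hab ha'b' =>
    h _ (Or.inl (Set.add_mem_add ⟨_, _, hab, rfl⟩ ⟨_, _, ha'b', rfl⟩))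
  obtain ⟨C, hC, hCR, hCU⟩ :=
    D.underlying.exists_minimal_isVertexCover_disjoint_inter_subsingleton
      (U := {v | D.w v ≤ e v}) (R := {v | 2 * D.w v ≤ e v})
      (fun v (hv : 2 * D.w v ≤ e v) => show D.w v ≤ e v by omega)
      (fun a ha b hb a' ha' b' hb' hab ha'b' => by
        by_contra! hne
        exact hsq hab ha'b' (edgeExp_add_edgeExp_le_of_ne hab.ne ha'b'.ne hne.1 hne.2.1
          hne.2.2.1 hne.2.2.2 ha hb ha' hb'))
      (fun a ha b hb c hc hab hbc hac => h _ (Or.inr ⟨a, b, c, ⟨hab, hbc, hac⟩, rfl⟩)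
        (edgeExp_add_single_le hab.ne hbc.ne hac.ne ha hb hc))
      (fun c hc x hx y hy hcx hcy => by
        by_contra hxy
        exact hsq hcx hcy (edgeExp_add_edgeExp_le_of_center hcx.ne hcy.ne hxy hc hx hy))
      (fun a ha b hb hab => hsq hab hab (edgeExp_add_edgeExp_self_le hab.ne ha hb))
  rcases H C hC with ⟨v, hvC, hvR⟩ | hnt
  · exact Set.disjoint_left.1 hCR hvC hvR
  · exact hnt.not_subsingleton hCU

theorem w_eq_one_of_adj (hsink : ∀ i ∈ D.Vplus, D.IsSink i) {i j : Fin n} (h : D.adj i j) :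
    D.w i = 1 := by
  by_contra hne
  exact hsink i (show 2 ≤ D.w i by have := D.one_le_w i; omega) j h

variable (K : Type*) [Field K]

theorem monomial_edgeExp (i j : Fin n) :
    monomial (D.edgeExp i j) (1 : K) = X i ^ D.w i * X j ^ D.w j := by
  rw [edgeExp, ← one_mul (1 : K), ← monomial_mul, X_pow_eq_monomial, X_pow_eq_monomial]

theorem edgeIdeal_eq_span (hsink : ∀ i ∈ D.Vplus, D.IsSink i) :
    edgeIdeal K D = Ideal.span ((fun d => monomial d (1 : K)) '' D.edgeExps) := by
  have hgen : ∀ {i j}, D.adj i j → monomial (D.edgeExp i j) (1 : K) = X i * X j ^ D.w j :=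
    fun hij => by rw [monomial_edgeExp, D.w_eq_one_of_adj hsink hij, pow_one]
  rw [edgeIdeal, edgeIdealOn]
  congr 1
  ext m
  constructor
  · rintro ⟨i, j, -, -, hij, rfl⟩
    exact ⟨D.edgeExp i j, ⟨i, j, Or.inl hij, rfl⟩, hgen hij⟩
  · rintro ⟨_, ⟨i, j, hij | hji, rfl⟩, rfl⟩
    · exact ⟨i, j, trivial, trivial, hij, hgen hij⟩
    · exact ⟨j, i, trivial, trivial, hji, by rw [edgeExp_comm]; exact hgen hji⟩

theorem X_pow_mul_X_pow_mem_edgeIdeal (hsink : ∀ i ∈ D.Vplus, D.IsSink i) {i j : Fin n}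
    (hij : D.underlying.Adj i j) : X i ^ D.w i * X j ^ D.w j ∈ edgeIdeal K D := by
  rw [D.edgeIdeal_eq_span K hsink, ← monomial_edgeExp]
  exact Ideal.subset_span ⟨_, ⟨i, j, hij, rfl⟩, rfl⟩

theorem sq_edgeIdeal_eq_span (hsink : ∀ i ∈ D.Vplus, D.IsSink i) :
    edgeIdeal K D ^ 2 =
      Ideal.span ((fun d => monomial d (1 : K)) '' (D.edgeExps + D.edgeExps)) := by
  rw [sq, D.edgeIdeal_eq_span K hsink, span_monomial_image_mul]

theorem sq_sup_span_triangles_eq_span (hsink : ∀ i ∈ D.Vplus, D.IsSink i) :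
    edgeIdeal K D ^ 2 ⊔ Ideal.span {m : MvPoly n K | ∃ i j r : Fin n, D.IsTriangle i j r ∧
        m = X i ^ D.w i * X j ^ D.w j * X r ^ D.w r} =
      Ideal.span ((fun d => monomial d (1 : K)) ''
        (D.edgeExps + D.edgeExps ∪ D.triangleExps)) := by
  rw [D.sq_edgeIdeal_eq_span K hsink, Set.image_union, Ideal.span_union]
  congr
  ext m
  constructor
  · rintro ⟨i, j, r, htri, rfl⟩
    exact ⟨_, ⟨i, j, r, htri, rfl⟩, by dsimp only; rw [monomial_add_single, monomial_edgeExp]⟩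
  · rintro ⟨_, ⟨i, j, r, htri, rfl⟩, rfl⟩
    exact ⟨i, j, r, htri, by dsimp only; rw [monomial_add_single, monomial_edgeExp]⟩

theorem edgeIdeal_le_iff {q : Ideal (MvPoly n K)} (hq : q.IsPrime) :
    edgeIdeal K D ≤ q ↔ D.underlying.IsVertexCover {v | X v ∈ q} := by
  rw [edgeIdeal, edgeIdealOn, Ideal.span_le]
  constructor
  · intro h
    have hmem : ∀ {i j}, D.adj i j → X i ∈ q ∨ X j ∈ q := fun {i j} hij =>
      (hq.mem_or_mem (h ⟨i, j, trivial, trivial, hij, rfl⟩)).imp id (hq.mem_of_pow_mem _)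
    rintro i j (hij | hji)
    · exact hmem hij
    · exact (hmem hji).symm
  · rintro h _ ⟨i, j, -, -, hij, rfl⟩
    rcases h (Or.inl hij) with hi | hj
    · exact q.mul_mem_right _ hi
    · exact q.mul_mem_left _ (q.pow_mem_of_mem hj _ (D.one_le_w j))

theorem mem_minimalPrimes_edgeIdeal_iff {P : Ideal (MvPoly n K)} :
    P ∈ (edgeIdeal K D).minimalPrimes ↔
      ∃ C, Minimal D.underlying.IsVertexCover C ∧ P = Ideal.span (X '' C) := by
  have hcover : ∀ C, edgeIdeal K D ≤ Ideal.span (X '' C) ↔ D.underlying.IsVertexCover C :=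
    fun C => by simp [D.edgeIdeal_le_iff K (isPrime_span_X_image C), X_mem_span_X_image_iff]
  have hspan_le : ∀ {C} {q : Ideal (MvPoly n K)},
      Ideal.span (X '' C) ≤ q ↔ C ⊆ {v | X v ∈ q} := by
    simp [Ideal.span_le, Set.subset_def]
  constructor
  · rintro ⟨⟨hP, hIP⟩, hmin⟩
    have hC := (D.edgeIdeal_le_iff K hP).1 hIP
    have hCP : Ideal.span (X '' {v | X v ∈ P}) ≤ P := hspan_le.2 subset_rfl
    refine ⟨_, ⟨hC, fun C' hC' hC'C => ?_⟩,
      (hmin ⟨isPrime_span_X_image _, (hcover _).2 hC⟩ hCP).antisymm hCP⟩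
    have hC'P : Ideal.span (X '' C') ≤ P := hspan_le.2 hC'C
    exact fun v hv =>
      X_mem_span_X_image_iff.1 (hmin ⟨isPrime_span_X_image _, (hcover _).2 hC'⟩ hC'P hv)
  · rintro ⟨C, hC, rfl⟩
    refine ⟨⟨isPrime_span_X_image C, (hcover C).2 hC.prop⟩, fun q ⟨hq, hIq⟩ hqC => ?_⟩
    exact hspan_le.2 (hC.le_of_le ((D.edgeIdeal_le_iff K hq).1 hIq)
      fun v hv => X_mem_span_X_image_iff.1 (hqC hv))

theorem exists_notMem_mul_X_pow_mem_edgeIdeal (hsink : ∀ i ∈ D.Vplus, D.IsSink i)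
    {C : Set (Fin n)} (hC : Minimal D.underlying.IsVertexCover C) {v : Fin n} (hv : v ∈ C) :
    ∃ s ∉ Ideal.span (X '' C : Set (MvPoly n K)), s * X v ^ D.w v ∈ edgeIdeal K D := by
  obtain ⟨x, hxC, hvx⟩ := D.underlying.exists_adj_notMem_of_minimal_isVertexCover hC hv
  refine ⟨X x ^ D.w x, fun hx => hxC (X_mem_span_X_image_iff.1
    ((isPrime_span_X_image C).mem_of_pow_mem _ hx)), ?_⟩
  rw [mul_comm]
  exact D.X_pow_mul_X_pow_mem_edgeIdeal K hsink hvx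

theorem exists_notMem_mul_triangle_mem (hsink : ∀ i ∈ D.Vplus, D.IsSink i)
    {C : Set (Fin n)} (hC : Minimal D.underlying.IsVertexCover C) {i j r : Fin n}
    (htri : D.IsTriangle i j r) :
    ∃ s ∉ Ideal.span (X '' C : Set (MvPoly n K)),
      s * (X i ^ D.w i * X j ^ D.w j * X r ^ D.w r) ∈ edgeIdeal K D ^ 2 := by
  obtain ⟨hij, hjr, hir⟩ := htri
  rcases hC.prop hij with hi | hj
  · obtain ⟨s, hs, hsi⟩ := D.exists_notMem_mul_X_pow_mem_edgeIdeal K hsink hC hi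
    refine ⟨s, hs, ?_⟩
    rw [show s * (X i ^ D.w i * X j ^ D.w j * X r ^ D.w r) =
      (s * X i ^ D.w i) * (X j ^ D.w j * X r ^ D.w r) by ring, sq]
    exact Ideal.mul_mem_mul hsi (D.X_pow_mul_X_pow_mem_edgeIdeal K hsink hjr)
  · obtain ⟨s, hs, hsj⟩ := D.exists_notMem_mul_X_pow_mem_edgeIdeal K hsink hC hj
    refine ⟨s, hs, ?_⟩
    rw [show s * (X i ^ D.w i * X j ^ D.w j * X r ^ D.w r) =
      (s * X j ^ D.w j) * (X i ^ D.w i * X r ^ D.w r) by ring, sq]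
    exact Ideal.mul_mem_mul hsj (D.X_pow_mul_X_pow_mem_edgeIdeal K hsink hir)

theorem mem_sq_sup_span_triangles_of_forall (hsink : ∀ i ∈ D.Vplus, D.IsSink i)
    {f : MvPoly n K} (hf : ∀ C, Minimal D.underlying.IsVertexCover C →
      ∃ s ∉ Ideal.span (X '' C : Set (MvPoly n K)), s * f ∈ edgeIdeal K D ^ 2) :
    f ∈ edgeIdeal K D ^ 2 ⊔ Ideal.span {m : MvPoly n K | ∃ i j r : Fin n, D.IsTriangle i j r ∧
        m = X i ^ D.w i * X j ^ D.w j * X r ^ D.w r} := by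
  rw [D.sq_sup_span_triangles_eq_span K hsink, mem_ideal_span_monomial_image]
  intro e he
  refine D.exists_le_of_forall_minimal_isVertexCover e fun C hC => ?_
  obtain ⟨s, hs, hsf⟩ := hf C hC
  rw [D.sq_edgeIdeal_eq_span K hsink] at hsf
  obtain ⟨b, hb, g, hg, hle⟩ := exists_le_add_of_mul_mem hs hsf he
  exact D.inter_nonempty_or_inter_nontrivial_of_le_add hC.prop hb hg hle

end WOGraph

/-- If `V⁺` are sinks, then
`I^{(2)} = I^2 + (x_i^{w_i} x_j^{w_j} x_r^{w_r} : {x_i,x_j,x_r} a triangle of G)`. -/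
theorem stmt16 {n : ℕ} (K : Type*) [Field K] (D : WOGraph n)
    (hsink : ∀ i ∈ D.Vplus, D.IsSink i) :
    symbolicPower (edgeIdeal K D) 2 =
      (edgeIdeal K D) ^ 2 ⊔
        Ideal.span {m : MvPoly n K | ∃ i j r : Fin n, D.IsTriangle i j r ∧
          m = X i ^ D.w i * X j ^ D.w j * X r ^ D.w r} := by
  apply le_antisymm
  · intro f hf
    refine D.mem_sq_sup_span_triangles_of_forall K hsink fun C hC => ?_
    have hP := (D.mem_minimalPrimes_edgeIdeal_iff K).2 ⟨C, hC, rfl⟩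
    exact (Ideal.mem_comap_map_atPrime_iff _ _).1 (Ideal.mem_iInf.1 (Ideal.mem_iInf.1 hf _) hP)
  · refine le_iInf₂ fun P hP => ?_
    obtain ⟨C, hC, rfl⟩ := (D.mem_minimalPrimes_edgeIdeal_iff K).1 hP
    refine sup_le Ideal.le_comap_map (Ideal.span_le.2 ?_)
    rintro _ ⟨i, j, r, htri, rfl⟩
    exact (Ideal.mem_comap_map_atPrime_iff _ _).2
      (D.exists_notMem_mul_triangle_mem K hsink hC htri)
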